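/- If U₁,...,Uₙ,V₁,...,Vₙ are 2n jointly independent uniform [0,1] random variables, then the statistic φₙ' = (3n²/(n²-1)) ( n⁻² ∑_{i,j} |Uᵢ - Vⱼ| - n⁻¹ ∑_i |Uᵢ - Vᵢ| ) has variance 2n²/(5(n+1)²(n-1)). -/

import Mathlib

/-!
Write `X i j = |U i - V j|`. The statistic is `3n²/(n²-1) · ∑ c i j · X i j` with
`c i j = 1/n² - [i = j]/n`, a matrix whose row and column sums vanish. By independence,
`Cov(X i j, X k l)` depends only on which indices coincide: it is `1/180` when exactly one index
is shared (from `E|X-Y||X-Z| = 7/60` and `E|X-Y| = 1/3`), `0` when none is, and the variance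
`1/18 = 1/180 + 1/180 + 2/45` when both are. Because `c` is doubly centred, the two `1/180`
terms contribute nothing, leaving `Var = (3n²/(n²-1))² · 2/45 · ∑ c i j²`, and
`∑ c i j² = (n-1)/n²`.
-/

open MeasureTheory ProbabilityTheory Finset

theorem Continuous.integrable_prod_restrict {α β E : Type*} [TopologicalSpace α]
    [MeasurableSpace α] [TopologicalSpace β] [MeasurableSpace β]
    [OpensMeasurableSpace (α × β)] [T2Space α] [T2Space β] [NormedAddCommGroup E]
    {μ : Measure α} {ν : Measure β}
    [SFinite μ] [SFinite ν] [IsFiniteMeasureOnCompacts μ] [IsFiniteMeasureOnCompacts ν]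
    {s : Set α} {t : Set β} (hs : IsCompact s) (ht : IsCompact t) {f : α × β → E}
    (hf : Continuous f) : Integrable f ((μ.restrict s).prod (ν.restrict t)) := by
  rw [Measure.prod_restrict]
  exact hf.continuousOn.integrableOn_compact (hs.prod ht)

theorem ProbabilityTheory.HasLaw.of_map_eq {Ω 𝓧 : Type*} [MeasurableSpace Ω]
    [MeasurableSpace 𝓧] {X : Ω → 𝓧} {μ : Measure 𝓧} {P : Measure Ω} [NeZero μ]
    (h : P.map X = μ) : HasLaw X μ P :=
  ⟨AEMeasurable.of_map_ne_zero (h ▸ NeZero.ne μ), h⟩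

lemma variance_fun_sum_const_mul {Ω ι : Type*} [MeasurableSpace Ω] {P : Measure Ω}
    [IsFiniteMeasure P] [Fintype ι] {X : ι → Ω → ℝ} (hX : ∀ i, MemLp (X i) 2 P)
    (c : ι → ℝ) :
    Var[fun ω => ∑ i, c i * X i ω; P] = ∑ i, ∑ j, c i * c j * cov[X i, X j; P] := by
  rw [variance_fun_sum fun i => (hX i).const_mul (c i)]
  simp only [covariance_const_mul_left, covariance_const_mul_right]
  exact sum_congr rfl fun i _ => sum_congr rfl fun j _ => by ring

lemma sum_sum_mul_mul_ite_of_sum_eq_zero {α β : Type*} [Fintype α] [Fintype β]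
    [DecidableEq α] [DecidableEq β] {c : α × β → ℝ} (hrow : ∀ i, ∑ j, c (i, j) = 0)
    (hcol : ∀ j, ∑ i, c (i, j) = 0) (a b d : ℝ) :
    ∑ p, ∑ q, c p * c q * ((if p.1 = q.1 then a else 0) + (if p.2 = q.2 then b else 0)
      + (if p = q then d else 0)) = d * ∑ p, c p ^ 2 := by
  have hfst : ∑ p, ∑ q, c p * c q * (if p.1 = q.1 then a else 0) = 0 := by
    simp [Fintype.sum_prod_type_right, ← sum_mul, ← mul_sum, hrow]
  have hsnd : ∑ p, ∑ q, c p * c q * (if p.2 = q.2 then b else 0) = 0 := by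
    simp [Fintype.sum_prod_type, ← sum_mul, ← mul_sum, hcol]
  have hdiag : ∑ p, ∑ q, c p * c q * (if p = q then d else 0) = d * ∑ p, c p ^ 2 := by
    simp [mul_sum, sq, mul_comm]
  simp only [mul_add, sum_add_distrib, hfst, hsnd, hdiag, zero_add]

local notation "μ₀₁" => volume.restrict (Set.Icc (0:ℝ) 1)

instance : IsProbabilityMeasure μ₀₁ := ⟨by simp [Real.volume_Icc]⟩

lemma integral_uniform_eq_intervalIntegral (f : ℝ → ℝ) :
    ∫ x, f x ∂μ₀₁ = ∫ x in (0:ℝ)..1, f x := by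
  rw [intervalIntegral.integral_of_le zero_le_one, integral_Icc_eq_integral_Ioc]

lemma integral_abs_sub_uniform {x : ℝ} (hx : x ∈ Set.Icc (0:ℝ) 1) :
    ∫ y, |x - y| ∂μ₀₁ = x ^ 2 - x + 1 / 2 := by
  have hint : ∀ a b : ℝ, IntervalIntegrable (fun y => |x - y|) volume a b := fun a b =>
    (by fun_prop : Continuous fun y : ℝ => |x - y|).intervalIntegrable a b
  have below : ∫ y in (0:ℝ)..x, |x - y| = x ^ 2 / 2 := by
    rw [intervalIntegral.integral_congr (g := fun y => x - y) fun y hy => by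
      rw [Set.uIcc_of_le hx.1] at hy
      exact abs_of_nonneg (sub_nonneg.2 hy.2)]
    rw [intervalIntegral.integral_sub (by simp) (by simp)]
    simp
    ring
  have above : ∫ y in x..1, |x - y| = (1 - x) ^ 2 / 2 := by
    rw [intervalIntegral.integral_congr (g := fun y => y - x) fun y hy => by
      rw [Set.uIcc_of_le hx.2] at hy
      exact abs_sub_comm x y ▸ abs_of_nonneg (sub_nonneg.2 hy.1)]
    rw [intervalIntegral.integral_sub (by simp) (by simp)]
    simp
    ring
  rw [integral_uniform_eq_intervalIntegral,
    ← intervalIntegral.integral_add_adjacent_intervals (hint 0 x) (hint x 1), below, above]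
  ring

lemma integral_sq_sub_uniform (x : ℝ) : ∫ y, (x - y) ^ 2 ∂μ₀₁ = x ^ 2 - x + 1 / 3 := by
  rw [integral_uniform_eq_intervalIntegral,
    intervalIntegral.integral_comp_sub_left (fun t => t ^ 2) x]
  simp
  ring

lemma integral_quadratic_uniform (a : ℝ) : ∫ x, (x ^ 2 - x + a) ∂μ₀₁ = a - 1 / 6 := by
  rw [integral_uniform_eq_intervalIntegral]
  simp
  ring

lemma integral_sq_quadratic_uniform : ∫ x, (x ^ 2 - x + 1 / 2) ^ 2 ∂μ₀₁ = 7 / 60 := by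
  have expand : ∀ x : ℝ, (x ^ 2 - x + 1 / 2) ^ 2 = x ^ 4 - 2 * x ^ 3 + 2 * x ^ 2 - x + 1 / 4 :=
    fun x => by ring
  simp_rw [expand, integral_uniform_eq_intervalIntegral]
  simp (disch := (apply Continuous.intervalIntegrable; fun_prop))
    [intervalIntegral.integral_add, intervalIntegral.integral_sub]
  norm_num

section UniformMoments

variable {Ω : Type*} [MeasurableSpace Ω] {P : Measure Ω} [IsProbabilityMeasure P]
  {X Y Z : Ω → ℝ}

lemma memLp_of_hasLaw_uniform (hX : HasLaw X μ₀₁ P) (p : ENNReal) : MemLp X p P := by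
  refine MemLp.of_bound hX.aemeasurable.aestronglyMeasurable 1 ?_
  have hmem : ∀ᵐ ω ∂P, X ω ∈ Set.Icc (0:ℝ) 1 :=
    (hX.ae_iff measurableSet_Icc.mem).2 (ae_restrict_mem measurableSet_Icc)
  filter_upwards [hmem] with ω hω
  rw [Real.norm_eq_abs, abs_le]
  exact ⟨by linarith [hω.1], hω.2⟩

lemma memLp_abs_sub_of_hasLaw_uniform (hX : HasLaw X μ₀₁ P) (hY : HasLaw Y μ₀₁ P)
    (p : ENNReal) : MemLp (fun ω => |X ω - Y ω|) p P :=
  ((memLp_of_hasLaw_uniform hX p).sub (memLp_of_hasLaw_uniform hY p)).abs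

lemma integral_comp_of_indepFun_uniform (hX : HasLaw X μ₀₁ P) (hY : HasLaw Y μ₀₁ P)
    (hXY : X ⟂ᵢ[P] Y) {f : ℝ × ℝ → ℝ} (hf : Continuous f) :
    ∫ ω, f (X ω, Y ω) ∂P = ∫ x, ∫ y, f (x, y) ∂μ₀₁ ∂μ₀₁ := by
  rw [← integral_prod f (hf.integrable_prod_restrict isCompact_Icc isCompact_Icc)]
  exact (hXY.hasLaw_prod hX hY).integral_comp hf.aestronglyMeasurable

lemma integral_abs_sub_of_indepFun (hX : HasLaw X μ₀₁ P) (hY : HasLaw Y μ₀₁ P)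
    (hXY : X ⟂ᵢ[P] Y) : ∫ ω, |X ω - Y ω| ∂P = 1 / 3 := by
  rw [integral_comp_of_indepFun_uniform hX hY hXY (f := fun p => |p.1 - p.2|) (by fun_prop),
    setIntegral_congr_fun measurableSet_Icc fun x hx => integral_abs_sub_uniform hx,
    integral_quadratic_uniform]
  norm_num

lemma integral_sq_sub_of_indepFun (hX : HasLaw X μ₀₁ P) (hY : HasLaw Y μ₀₁ P)
    (hXY : X ⟂ᵢ[P] Y) : ∫ ω, (X ω - Y ω) ^ 2 ∂P = 1 / 6 := by
  rw [integral_comp_of_indepFun_uniform hX hY hXY (f := fun p => (p.1 - p.2) ^ 2)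
    (by fun_prop)]
  simp only [integral_sq_sub_uniform, integral_quadratic_uniform]
  norm_num

lemma integral_abs_sub_mul_abs_sub_of_indepFun (hX : HasLaw X μ₀₁ P) (hY : HasLaw Y μ₀₁ P)
    (hZ : HasLaw Z μ₀₁ P) (hXYZ : X ⟂ᵢ[P] fun ω => (Y ω, Z ω)) (hYZ : Y ⟂ᵢ[P] Z) :
    ∫ ω, |X ω - Y ω| * |X ω - Z ω| ∂P = 7 / 60 := by
  let f : ℝ × ℝ × ℝ → ℝ := fun p => |p.1 - p.2.1| * |p.1 - p.2.2|
  have hf : Continuous f := by fun_prop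
  have hint : Integrable f ((μ₀₁).prod ((μ₀₁).prod μ₀₁)) := by
    rw [Measure.prod_restrict]
    exact hf.integrable_prod_restrict isCompact_Icc (isCompact_Icc.prod isCompact_Icc)
  calc ∫ ω, |X ω - Y ω| * |X ω - Z ω| ∂P
      = ∫ p, f p ∂(μ₀₁).prod ((μ₀₁).prod μ₀₁) :=
        (hXYZ.hasLaw_prod hX (hYZ.hasLaw_prod hY hZ)).integral_comp hf.aestronglyMeasurable
    _ = ∫ x, (∫ y, |x - y| ∂μ₀₁) * ∫ z, |x - z| ∂μ₀₁ ∂μ₀₁ := by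
        rw [integral_prod f hint]
        exact integral_congr_ae <| ae_of_all _ fun x =>
          integral_prod_mul (fun y => |x - y|) (fun z => |x - z|)
    _ = ∫ x, (x ^ 2 - x + 1 / 2) ^ 2 ∂μ₀₁ :=
        setIntegral_congr_fun measurableSet_Icc fun x hx => by
          simp only [integral_abs_sub_uniform hx, sq]
    _ = 7 / 60 := integral_sq_quadratic_uniform

lemma variance_abs_sub_of_indepFun (hX : HasLaw X μ₀₁ P) (hY : HasLaw Y μ₀₁ P)
    (hXY : X ⟂ᵢ[P] Y) : Var[fun ω => |X ω - Y ω|; P] = 1 / 18 := by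
  rw [variance_eq_sub (memLp_abs_sub_of_hasLaw_uniform hX hY 2)]
  simp only [Pi.pow_apply, sq_abs]
  rw [integral_sq_sub_of_indepFun hX hY hXY, integral_abs_sub_of_indepFun hX hY hXY]
  norm_num

lemma covariance_abs_sub_abs_sub_of_indepFun (hX : HasLaw X μ₀₁ P) (hY : HasLaw Y μ₀₁ P)
    (hZ : HasLaw Z μ₀₁ P) (hXYZ : X ⟂ᵢ[P] fun ω => (Y ω, Z ω)) (hYZ : Y ⟂ᵢ[P] Z) :
    cov[fun ω => |X ω - Y ω|, fun ω => |X ω - Z ω|; P] = 1 / 180 := by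
  rw [covariance_eq_sub (memLp_abs_sub_of_hasLaw_uniform hX hY 2)
    (memLp_abs_sub_of_hasLaw_uniform hX hZ 2)]
  simp only [Pi.mul_apply]
  rw [integral_abs_sub_mul_abs_sub_of_indepFun hX hY hZ hXYZ hYZ,
    integral_abs_sub_of_indepFun hX hY (hXYZ.comp measurable_id measurable_fst),
    integral_abs_sub_of_indepFun hX hZ (hXYZ.comp measurable_id measurable_snd)]
  norm_num

lemma covariance_abs_sub_of_iIndepFun_sumElim {α β : Type*} [DecidableEq α] [DecidableEq β]
    {U : α → Ω → ℝ} {V : β → Ω → ℝ} (hU : ∀ i, HasLaw (U i) μ₀₁ P)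
    (hV : ∀ j, HasLaw (V j) μ₀₁ P) (hInd : iIndepFun (Sum.elim U V) P) (p q : α × β) :
    cov[fun ω => |U p.1 ω - V p.2 ω|, fun ω => |U q.1 ω - V q.2 ω|; P]
      = (if p.1 = q.1 then 1 / 180 else 0) + (if p.2 = q.2 then 1 / 180 else 0)
        + (if p = q then 2 / 45 else 0) := by
  obtain ⟨i, j⟩ := p
  obtain ⟨k, l⟩ := q
  have hW : ∀ a, AEMeasurable (Sum.elim U V a) P := by
    rintro (a | a)
    exacts [(hU a).aemeasurable, (hV a).aemeasurable]
  by_cases hik : i = k <;> by_cases hjl : j = l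
  · subst hik hjl
    rw [covariance_self (by fun_prop),
      variance_abs_sub_of_indepFun (hU i) (hV j) (hInd.indepFun Sum.inl_ne_inr)]
    norm_num
  · subst hik
    have hind : U i ⟂ᵢ[P] fun ω => (V j ω, V l ω) :=
      (hInd.indepFun_prodMk₀ hW (.inr j) (.inr l) (.inl i) Sum.inr_ne_inl Sum.inr_ne_inl).symm
    rw [covariance_abs_sub_abs_sub_of_indepFun (hU i) (hV j) (hV l) hind
      (hInd.indepFun (Sum.inr_injective.ne hjl))]
    simp [hjl]
  · subst hjl
    have hind : V j ⟂ᵢ[P] fun ω => (U i ω, U k ω) :=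
      (hInd.indepFun_prodMk₀ hW (.inl i) (.inl k) (.inr j) Sum.inl_ne_inr Sum.inl_ne_inr).symm
    simp_rw [abs_sub_comm (U _ _) (V j _)]
    rw [covariance_abs_sub_abs_sub_of_indepFun (hV j) (hU i) (hU k) hind
      (hInd.indepFun (Sum.inl_injective.ne hik))]
    simp [hik]
  · have hind : (fun ω => (U i ω, V j ω)) ⟂ᵢ[P] fun ω => (U k ω, V l ω) :=
      hInd.indepFun_prodMk_prodMk₀ hW (.inl i) (.inr j) (.inl k) (.inr l)
        (Sum.inl_injective.ne hik) Sum.inl_ne_inr Sum.inr_ne_inl (Sum.inr_injective.ne hjl)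
    have habs : (fun ω => |U i ω - V j ω|) ⟂ᵢ[P] fun ω => |U k ω - V l ω| :=
      hind.comp (φ := fun x : ℝ × ℝ => |x.1 - x.2|) (ψ := fun x : ℝ × ℝ => |x.1 - x.2|)
        (by fun_prop) (by fun_prop)
    rw [habs.covariance_eq_zero (memLp_abs_sub_of_hasLaw_uniform (hU i) (hV j) 2)
      (memLp_abs_sub_of_hasLaw_uniform (hU k) (hV l) 2)]
    simp [hik, hjl]

end UniformMoments

noncomputable def footruleCoeff (n : ℕ) (p : Fin n × Fin n) : ℝ :=
  1 / (n : ℝ) ^ 2 - if p.1 = p.2 then 1 / (n : ℝ) else 0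

lemma sum_footruleCoeff_mul (n : ℕ) (x : Fin n → Fin n → ℝ) :
    ∑ p, footruleCoeff n p * x p.1 p.2
      = 1 / (n : ℝ) ^ 2 * ∑ i, ∑ j, x i j - 1 / (n : ℝ) * ∑ i, x i i := by
  simp [footruleCoeff, sub_mul, Fintype.sum_prod_type, mul_sum, ite_mul]

lemma footruleCoeff_sum_snd {n : ℕ} (i : Fin n) : ∑ j, footruleCoeff n (i, j) = 0 := by
  have hn : (n : ℝ) ≠ 0 := by exact_mod_cast i.pos.ne'
  simp [footruleCoeff]
  field_simp
  ring

lemma footruleCoeff_sum_fst {n : ℕ} (j : Fin n) : ∑ i, footruleCoeff n (i, j) = 0 := by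
  have hn : (n : ℝ) ≠ 0 := by exact_mod_cast j.pos.ne'
  simp [footruleCoeff]
  field_simp
  ring

lemma sum_footruleCoeff_sq (n : ℕ) :
    ∑ p, footruleCoeff n p ^ 2 = ((n : ℝ) - 1) / (n : ℝ) ^ 2 := by
  rcases eq_or_ne n 0 with rfl | hn
  · simp
  have hn' : (n : ℝ) ≠ 0 := by exact_mod_cast hn
  simp [footruleCoeff, Fintype.sum_prod_type, sub_sq, sum_add_distrib]
  field_simp
  ring

theorem footrule_first_representation_variance_general
    {Ω : Type*} [MeasureSpace Ω] [IsProbabilityMeasure (ℙ : Measure Ω)]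
    (n : ℕ) (hn : 2 ≤ n) (U V : Fin n → Ω → ℝ)
    (hInd : iIndepFun (Sum.elim U V) ℙ)
    (hUunif : ∀ i, Measure.map (U i) ℙ = volume.restrict (Set.Icc (0:ℝ) 1))
    (hVunif : ∀ i, Measure.map (V i) ℙ = volume.restrict (Set.Icc (0:ℝ) 1)) :
    variance (fun ω => (3 * (n:ℝ)^2 / ((n:ℝ)^2 - 1)) *
        ((1 / (n:ℝ)^2) * ∑ i : Fin n, ∑ j : Fin n, |U i ω - V j ω|
          - (1 / (n:ℝ)) * ∑ i : Fin n, |U i ω - V i ω|)) ℙ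
      = 2 * (n:ℝ)^2 / (5 * ((n:ℝ) + 1)^2 * ((n:ℝ) - 1)) := by
  have hU i : HasLaw (U i) μ₀₁ ℙ := .of_map_eq (hUunif i)
  have hV j : HasLaw (V j) μ₀₁ ℙ := .of_map_eq (hVunif j)
  simp only [← sum_footruleCoeff_mul]
  rw [variance_const_mul,
    variance_fun_sum_const_mul (X := fun (p : Fin n × Fin n) ω => |U p.1 ω - V p.2 ω|)
      fun p => memLp_abs_sub_of_hasLaw_uniform (hU p.1) (hV p.2) 2]
  simp only [covariance_abs_sub_of_iIndepFun_sumElim hU hV hInd]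
  rw [sum_sum_mul_mul_ite_of_sum_eq_zero footruleCoeff_sum_snd footruleCoeff_sum_fst,
    sum_footruleCoeff_sq]
  have hn' : (2 : ℝ) ≤ n := by exact_mod_cast hn
  have h1 : (n : ℝ) - 1 ≠ 0 := by linarith
  have h2 : (n : ℝ) + 1 ≠ 0 := by linarith
  have h3 : (n : ℝ) ^ 2 - 1 ≠ 0 := by nlinarith
  field_simp
  ring

theorem footrule_first_representation_variance
    {Ω : Type*} [MeasureSpace Ω] [IsProbabilityMeasure (ℙ : Measure Ω)]
    (n : ℕ) (hn : 2 ≤ n) (U V : Fin n → Ω → ℝ)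
    (hU : ∀ i, Measurable (U i)) (hV : ∀ i, Measurable (V i))
    (hInd : iIndepFun (Sum.elim U V) ℙ)
    (hUunif : ∀ i, Measure.map (U i) ℙ = volume.restrict (Set.Icc (0:ℝ) 1))
    (hVunif : ∀ i, Measure.map (V i) ℙ = volume.restrict (Set.Icc (0:ℝ) 1)) :
    variance (fun ω => (3 * (n:ℝ)^2 / ((n:ℝ)^2 - 1)) *
        ((1 / (n:ℝ)^2) * ∑ i : Fin n, ∑ j : Fin n, |U i ω - V j ω|
          - (1 / (n:ℝ)) * ∑ i : Fin n, |U i ω - V i ω|)) ℙ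
      = 2 * (n:ℝ)^2 / (5 * ((n:ℝ) + 1)^2 * ((n:ℝ) - 1)) :=
  footrule_first_representation_variance_general n hn U V hInd hUunif hVunif
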